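/- arXiv:1704.06887 — 2 statements merged into one kernel-verified Lean document; each statement's English description precedes it below -/
import Mathlib

section
/- Let F be a field of characteristic 2, let (A,σ) be a central simple F-algebra with orthogonal involution, and let K/F be a separable algebraic field extension (not necessarily finite). Then S(A_K, σ_K) equals the K-subspace of A_K = A ⊗_F K spanned by the elements x ⊗ 1 with x ∈ S(A,σ). -/
/-!
In characteristic two the map `q x = σ x * x` is additive modulo `Alt`, because
`σ x * y + σ y * x = u - σ u` for `u = σ x * y`, and `q (c • x) = c ^ 2 • q x`; hence `S(A,σ)` is a
subspace and `S(A_K,σ_K)` contains the span of `1 ⊗ S(A,σ)`. Conversely, write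
`X = ∑ bᵢ ⊗ xᵢ` over an `F`-basis `(bᵢ)` of `K`. Then `q X ≡ ∑ bᵢ ^ 2 ⊗ q xᵢ` modulo `Alt(A_K)`,
and `K·1 + Alt(A_K,σ_K)` is the base change of `F·1 + Alt(A,σ)`. As `K/F` is separable, the
`bᵢ ^ 2` are still linearly independent over `F`, so every `q xᵢ` lies in `F·1 + Alt(A,σ)`.
-/

open scoped TensorProduct

/-- `Alt(A,σ) = {x - σ(x) : x ∈ A}`. -/
def altSet {F A : Type*} [Field F] [Ring A] [Algebra F A] (σ : A →ₗ[F] A) : Set A :=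
  {y | ∃ x : A, y = x - σ x}

/-- `S(A,σ) = {x ∈ A : σ(x)x ∈ F·1 + Alt(A,σ)}`. -/
def sSet {F A : Type*} [Field F] [Ring A] [Algebra F A] (σ : A →ₗ[F] A) : Set A :=
  {x | ∃ α : F, σ x * x - algebraMap F A α ∈ altSet σ}

/-- An involution of the first kind is orthogonal if `Alt(A,σ) ∩ F·1 = {0}`. -/
def IsOrthogonal {F A : Type*} [Field F] [Ring A] [Algebra F A] (σ : A →ₗ[F] A) : Prop :=
  altSet σ ∩ Set.range (algebraMap F A) = {0}

lemma neg_eq_self_of_charP_two (R : Type*) {M : Type*} [Ring R] [CharP R 2] [AddCommGroup M]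
    [Module R M] (m : M) : -m = m := by
  rw [neg_eq_iff_add_eq_zero, ← two_smul R, CharTwo.two_eq_zero, zero_smul]

section Involution

variable {R B : Type*} [CommRing R] [Ring B] [Algebra R B] (τ : B →ₗ[R] B)

/-- `R·1 + Alt(B,τ)`. -/
def scalarAlt : Submodule R B :=
  1 ⊔ LinearMap.range (LinearMap.id - τ)

variable [CharP R 2] {τ} (hmul : ∀ x y, τ (x * y) = τ y * τ x) (hinv : ∀ x, τ (τ x) = x)
include hmul hinv

lemma mul_add_sub_mem_range (x y : B) :
    τ (x + y) * (x + y) - (τ x * x + τ y * y) ∈ LinearMap.range (LinearMap.id - τ) := by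
  refine ⟨τ x * y, ?_⟩
  rw [LinearMap.sub_apply, LinearMap.id_apply, hmul, hinv, sub_eq_add_neg,
    neg_eq_self_of_charP_two R, map_add]
  noncomm_ring

lemma sum_mul_sum_sub_mem_range {ι : Type*} (s : Finset ι) (x : ι → B) :
    τ (∑ i ∈ s, x i) * ∑ i ∈ s, x i - ∑ i ∈ s, τ (x i) * x i ∈
      LinearMap.range (LinearMap.id - τ) := by
  classical
  induction s using Finset.induction_on with
  | empty => simp
  | insert a s ha ih =>
    rw [Finset.sum_insert ha, Finset.sum_insert ha]
    convert add_mem (mul_add_sub_mem_range hmul hinv (x a) (∑ i ∈ s, x i)) ih using 1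
    abel

end Involution

section InvolutionOverField

variable {R B : Type*} [Field R] [Ring B] [Algebra R B] (τ : B →ₗ[R] B)

lemma mem_sSet_iff {x : B} : x ∈ sSet τ ↔ τ x * x ∈ scalarAlt τ := by
  simp only [sSet, altSet, scalarAlt, Submodule.mem_sup, Submodule.mem_one, LinearMap.mem_range,
    LinearMap.sub_apply, LinearMap.id_apply, Set.mem_ofPred_eq]
  constructor
  · rintro ⟨α, y, hy⟩
    exact ⟨_, ⟨α, rfl⟩, _, ⟨y, rfl⟩, by rw [← hy]; abel⟩
  · rintro ⟨_, ⟨α, rfl⟩, _, ⟨y, rfl⟩, h⟩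
    exact ⟨α, y, by rw [← h]; abel⟩

variable [CharP R 2] {τ} (hmul : ∀ x y, τ (x * y) = τ y * τ x) (hinv : ∀ x, τ (τ x) = x)
include hmul hinv

lemma sum_mem_sSet_iff {ι : Type*} (s : Finset ι) (x : ι → B) :
    ∑ i ∈ s, x i ∈ sSet τ ↔ ∑ i ∈ s, τ (x i) * x i ∈ scalarAlt τ := by
  have h : _ ∈ scalarAlt τ := Submodule.mem_sup_right (sum_mul_sum_sub_mem_range hmul hinv s x)
  rw [mem_sSet_iff]
  exact ⟨fun hq => by simpa using sub_mem hq h, fun hq => by simpa using add_mem h hq⟩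

def sSubmodule : Submodule R B where
  carrier := sSet τ
  zero_mem' := (mem_sSet_iff τ).2 (by simp)
  add_mem' {x y} hx hy := by
    rw [mem_sSet_iff] at *
    have h : _ ∈ scalarAlt τ := Submodule.mem_sup_right (mul_add_sub_mem_range hmul hinv x y)
    simpa using add_mem h (add_mem hx hy)
  smul_mem' c x hx := by
    rw [mem_sSet_iff] at *
    simpa [smul_smul] using Submodule.smul_mem _ (c * c) hx

end InvolutionOverField

section BaseChange

variable {R M N : Type*} (A : Type*) [CommRing R] [CommRing A] [Algebra R A]
  [AddCommGroup M] [Module R M] [AddCommGroup N] [Module R N]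

lemma Submodule.baseChange_sup (p q : Submodule R M) :
    (p ⊔ q).baseChange A = p.baseChange A ⊔ q.baseChange A := by
  refine le_antisymm ?_ (sup_le (Submodule.baseChange_mono A le_sup_left)
    (Submodule.baseChange_mono A le_sup_right))
  rw [Submodule.baseChange_eq_span, Submodule.span_le]
  rintro _ ⟨m, hm, rfl⟩
  obtain ⟨y, hy, z, hz, rfl⟩ := Submodule.mem_sup.1 hm
  rw [map_add]
  exact add_mem (Submodule.mem_sup_left (Submodule.tmul_mem_baseChange_of_mem 1 hy))
    (Submodule.mem_sup_right (Submodule.tmul_mem_baseChange_of_mem 1 hz))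

lemma LinearMap.range_baseChange (f : M →ₗ[R] N) :
    (LinearMap.range f).baseChange A = LinearMap.range (f.baseChange A) := by
  refine le_antisymm ?_ ?_
  · rw [Submodule.baseChange_eq_span, Submodule.span_le]
    rintro _ ⟨_, ⟨m, rfl⟩, rfl⟩
    exact ⟨1 ⊗ₜ m, rfl⟩
  · rintro _ ⟨z, rfl⟩
    induction z using TensorProduct.induction_on with
    | zero => simp
    | tmul a m => exact Submodule.tmul_mem_baseChange_of_mem a ⟨m, rfl⟩
    | add z w hz hw => rw [map_add]; exact add_mem hz hw

lemma Submodule.one_baseChange {B : Type*} [Ring B] [Algebra R B] :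
    (1 : Submodule R B).baseChange A = 1 := by
  rw [Submodule.one_eq_span, Submodule.baseChange_span, Set.image_singleton,
    TensorProduct.mk_apply, ← Algebra.TensorProduct.one_def, Submodule.one_eq_span]

lemma Submodule.mem_of_sum_tmul_mem_baseChange {F K ι : Type*} [Field F] [Ring K] [Algebra F K]
    [Module F M] {p : Submodule F M} {t : ι → K} (ht : LinearIndependent F t)
    {s : Finset ι} {m : ι → M} (h : ∑ i ∈ s, t i ⊗ₜ[F] m i ∈ p.baseChange K) {j : ι}
    (hj : j ∈ s) : m j ∈ p := by
  classical
  -- A left inverse `g` of `l ↦ ∑ lᵢ tᵢ` yields a functional `K → F` dual to `t` at `j`.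
  obtain ⟨g, hg⟩ := (Finsupp.linearCombination F t).exists_leftInverse_of_injective
    (linearIndependent_iff_ker.mp ht)
  let φ : K ⊗[F] M →ₗ[F] M := TensorProduct.lid F M ∘ₗ (Finsupp.lapply j ∘ₗ g).rTensor M
  have hφ : ∀ y ∈ p.baseChange K, φ y ∈ p := by
    rintro _ ⟨z, rfl⟩
    induction z using TensorProduct.induction_on with
    | zero => simp
    | tmul c n => simpa [φ] using p.smul_mem _ n.2
    | add z w hz hw => rw [map_add, map_add]; exact add_mem hz hw
  have hgt : ∀ i, g (t i) = Finsupp.single i 1 := fun i => by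
    simpa using LinearMap.congr_fun hg (Finsupp.single i 1)
  simpa [φ, hgt, Finsupp.single_apply, hj] using hφ _ h

end BaseChange

section InvolutionBaseChange

variable {F A : Type*} (K : Type*) [CommRing F] [Ring A] [Algebra F A] [CommRing K] [Algebra F K]
  {σ : A →ₗ[F] A}

lemma baseChange_map_mul (hmul : ∀ x y, σ (x * y) = σ y * σ x) (X Y : K ⊗[F] A) :
    σ.baseChange K (X * Y) = σ.baseChange K Y * σ.baseChange K X := by
  induction X using TensorProduct.induction_on with
  | zero => simp
  | add X X' hX hX' => simp only [add_mul, mul_add, map_add, hX, hX']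
  | tmul c a =>
    induction Y using TensorProduct.induction_on with
    | zero => simp
    | add Y Y' hY hY' => simp only [add_mul, mul_add, map_add, hY, hY']
    | tmul d b => simp [hmul, mul_comm c d]

lemma baseChange_map_map (hinv : ∀ x, σ (σ x) = x) (X : K ⊗[F] A) :
    σ.baseChange K (σ.baseChange K X) = X := by
  have hσσ : σ ∘ₗ σ = LinearMap.id := LinearMap.ext hinv
  rw [← LinearMap.comp_apply, ← LinearMap.baseChange_comp, hσσ, LinearMap.baseChange_id,
    LinearMap.id_apply]

variable (σ) in
lemma scalarAlt_baseChange :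
    scalarAlt (σ.baseChange K) = (scalarAlt σ).baseChange K := by
  rw [scalarAlt, scalarAlt, Submodule.baseChange_sup, Submodule.one_baseChange,
    LinearMap.range_baseChange, LinearMap.baseChange_sub, LinearMap.baseChange_id]

end InvolutionBaseChange

section SSetBaseChange

variable {F A K : Type*} [Field F] [Ring A] [Algebra F A] [Field K] [Algebra F K]
  {σ : A →ₗ[F] A}

variable (K) in
lemma one_tmul_mem_sSet_baseChange {x : A} (hx : x ∈ sSet σ) :
    (1 : K) ⊗ₜ[F] x ∈ sSet (σ.baseChange K) := by
  rw [mem_sSet_iff] at hx ⊢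
  rw [scalarAlt_baseChange, LinearMap.baseChange_tmul, Algebra.TensorProduct.tmul_mul_tmul,
    one_mul]
  exact Submodule.tmul_mem_baseChange_of_mem 1 hx

lemma forall_mem_sSet_of_sum_tmul_mem_sSet_baseChange [CharP K 2] {ι : Type*}
    (hmul : ∀ x y, σ (x * y) = σ y * σ x) (hinv : ∀ x, σ (σ x) = x) {t : ι → K}
    (ht : LinearIndependent F fun i => t i ^ 2) {s : Finset ι} {x : ι → A}
    (h : ∑ i ∈ s, t i ⊗ₜ[F] x i ∈ sSet (σ.baseChange K)) : ∀ i ∈ s, x i ∈ sSet σ := by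
  rw [sum_mem_sSet_iff (baseChange_map_mul K hmul) (baseChange_map_map K hinv),
    scalarAlt_baseChange] at h
  simp only [LinearMap.baseChange_tmul, Algebra.TensorProduct.tmul_mul_tmul, ← sq] at h
  exact fun i hi => (mem_sSet_iff σ).2 (Submodule.mem_of_sum_tmul_mem_baseChange ht h hi)

end SSetBaseChange

theorem stmt4_general {F A K : Type*} [Field F] [CharP F 2] [Ring A] [Algebra F A]
    (σ : A →ₗ[F] A) (hmul : ∀ x y : A, σ (x * y) = σ y * σ x) (hinv : ∀ x : A, σ (σ x) = x)
    [Field K] [Algebra F K] [Algebra.IsSeparable F K] :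
    sSet (LinearMap.baseChange K σ) =
      ↑(Submodule.span K ((fun x : A => (1 : K) ⊗ₜ[F] x) '' sSet σ)) := by
  have : CharP K 2 := charP_of_injective_algebraMap (algebraMap F K).injective 2
  refine Set.Subset.antisymm (fun X hX => ?_) ?_
  · let b := Module.Free.chooseBasis F K
    obtain ⟨c, rfl⟩ := TensorProduct.eq_repr_basis_left b X
    have hsq : LinearIndependent F fun i => b i ^ 2 := by
      simpa using b.linearIndependent.map_pow_expChar_pow_of_isSeparable 2 1
    have hc := forall_mem_sSet_of_sum_tmul_mem_sSet_baseChange hmul hinv hsq hX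
    refine Submodule.sum_mem _ fun i hi => ?_
    beta_reduce
    rw [TensorProduct.tmul_eq_smul_one_tmul]
    exact Submodule.smul_mem _ _ (Submodule.subset_span ⟨_, hc i hi, rfl⟩)
  · refine Submodule.span_le (p := sSubmodule (baseChange_map_mul K hmul)
      (baseChange_map_map K hinv)) |>.mpr ?_
    rintro _ ⟨x, hx, rfl⟩
    exact one_tmul_mem_sSet_baseChange K hx

theorem stmt4 {F A K : Type*} [Field F] [CharP F 2] [Ring A] [Algebra F A]
    [FiniteDimensional F A]
    (hcentral : ∀ z : A, (∀ y : A, z * y = y * z) → ∃ a : F, algebraMap F A a = z)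
    (hsimple : IsSimpleOrder (TwoSidedIdeal A))
    (σ : A →ₗ[F] A) (hmul : ∀ x y : A, σ (x * y) = σ y * σ x) (hinv : ∀ x : A, σ (σ x) = x)
    (horth : IsOrthogonal σ)
    [Field K] [Algebra F K] [Algebra.IsSeparable F K] :
    sSet (LinearMap.baseChange K σ) =
      ↑(Submodule.span K ((fun x : A => (1 : K) ⊗ₜ[F] x) '' sSet σ)) :=
  stmt4_general σ hmul hinv
end

section
/- Let F be a field of characteristic 2, let (A,σ) be a central simple F-algebra with orthogonal involution, and let K/F be a finite field extension of odd degree. Then σ is direct if and only if σ_K is direct. -/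
open scoped TensorProduct

/-- An involution is direct if the only `x` with `σ(x)x ∈ Alt(A,σ)` is `x = 0`. -/
def IsDirect {F A : Type*} [Field F] [Ring A] [Algebra F A] (σ : A →ₗ[F] A) : Prop :=
  ∀ x : A, σ x * x ∈ altSet σ → x = 0

/-!
In characteristic 2 the map `x ↦ σ(x) x mod Alt(A,σ)` is additive, because the cross term
`σ(x) y + σ(y) x` has the form `z + σ(z)`, which lies in `Alt(A,σ)`. Hence for
`x = ∑ bᵢ ⊗ aᵢ ∈ K ⊗ A` it sends `x` to `∑ bᵢ² ⊗ [σ(aᵢ) aᵢ]`. When `[K : F]` is odd every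
`x ∈ K` already lies in the field generated by the squares (its degree over that field is at
most 2 and divides `[K : F]`), so the `bᵢ²` again form an `F`-basis of `K`. Thus `σ_K(x) x ∈ Alt`
forces every `σ(aᵢ) aᵢ ∈ Alt`, and directness of `σ` gives `x = 0`. The converse is the
injectivity of `A → K ⊗ A`.
-/

open Module Polynomial

theorem IntermediateField.mem_of_sq_mem_of_odd_finrank {F K : Type*} [Field F] [Field K]
    [Algebra F K] [FiniteDimensional F K] (hodd : Odd (finrank F K))
    (L : IntermediateField F K) {x : K} (hx : x ^ 2 ∈ L) : x ∈ L := by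
  have hdeg : (minpoly L x).natDegree ≤ 2 := by
    have := minpoly.min L x (monic_X_pow_sub_C (⟨x ^ 2, hx⟩ : L) two_ne_zero) (by simp)
    simpa using natDegree_le_natDegree this
  have hdvd : (minpoly L x).natDegree ∣ finrank F K :=
    (minpoly.degree_dvd (.of_finite L x)).trans (Dvd.intro_left _ (finrank_mul_finrank F L K))
  have hpos := minpoly.natDegree_pos (IsIntegral.of_finite L x)
  have hone : (minpoly L x).natDegree = 1 := by
    interval_cases h : (minpoly L x).natDegree
    · rfl
    · exact absurd (hodd.of_dvd_nat hdvd) (by decide)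
  obtain ⟨y, rfl⟩ := minpoly.natDegree_eq_one_iff.mp hone
  exact y.2

theorem Submodule.span_squares_eq_top_of_odd_finrank {F K : Type*} [Field F] [Field K]
    [Algebra F K] [FiniteDimensional F K] (hodd : Odd (finrank F K)) :
    span F (Submonoid.square K : Set K) = ⊤ := by
  have htop : IntermediateField.adjoin F (Submonoid.square K : Set K) = ⊤ :=
    eq_top_iff.mpr fun x _ ↦ IntermediateField.mem_of_sq_mem_of_odd_finrank hodd _
      (IntermediateField.subset_adjoin F _ (IsSquare.sq x))
  rw [← Submonoid.closure_eq (Submonoid.square K), ← Algebra.adjoin_eq_span,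
    IntermediateField.adjoin_eq_top_iff.mp htop, Algebra.top_toSubmodule]

theorem Module.Basis.top_le_span_sq {F K ι : Type*} [Field F] [CharP F 2] [Field K] [Algebra F K]
    [FiniteDimensional F K] [Fintype ι] (b : Basis ι F K) (hodd : Odd (finrank F K)) :
    ⊤ ≤ Submodule.span F (Set.range fun i ↦ b i ^ 2) := by
  rw [← Submodule.span_squares_eq_top_of_odd_finrank hodd, Submodule.span_le]
  rintro _ ⟨y, rfl⟩
  have : y * y = ∑ i, b.repr y i ^ 2 • b i ^ 2 := by
    conv_lhs => rw [← b.sum_repr y]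
    have : CharP K 2 := charP_of_injective_algebraMap (algebraMap F K).injective 2
    simp_rw [CharTwo.sum_mul_self, smul_mul_smul_comm, ← sq]
  rw [SetLike.mem_coe, this]
  exact Submodule.sum_mem _ fun i _ ↦ Submodule.smul_mem _ _ (Submodule.subset_span ⟨i, rfl⟩)

noncomputable def Module.Basis.sq {F K ι : Type*} [Field F] [CharP F 2] [Field K] [Algebra F K]
    [FiniteDimensional F K] [Fintype ι] (b : Basis ι F K) (hodd : Odd (finrank F K)) :
    Basis ι F K :=
  basisOfTopLeSpanOfCardEqFinrank _ (b.top_le_span_sq hodd) (finrank_eq_card_basis b).symm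

@[simp]
theorem Module.Basis.sq_apply {F K ι : Type*} [Field F] [CharP F 2] [Field K] [Algebra F K]
    [FiniteDimensional F K] [Fintype ι] (b : Basis ι F K) (hodd : Odd (finrank F K)) (i : ι) :
    b.sq hodd i = b i ^ 2 := by
  simp [Module.Basis.sq, coe_basisOfTopLeSpanOfCardEqFinrank]

theorem LinearMap.baseChange_mul_rev {R A K : Type*} [CommSemiring R] [Semiring A] [Algebra R A]
    [CommSemiring K] [Algebra R K] (σ : A →ₗ[R] A) (hmul : ∀ x y, σ (x * y) = σ y * σ x)
    (x y : K ⊗[R] A) : σ.baseChange K (x * y) = σ.baseChange K y * σ.baseChange K x := by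
  induction x using TensorProduct.induction_on with
  | zero => simp
  | add x x' hx hx' => simp [add_mul, mul_add, hx, hx']
  | tmul k a =>
    induction y using TensorProduct.induction_on with
    | zero => simp
    | add y y' hy hy' => simp [add_mul, mul_add, hy, hy']
    | tmul l b => simp [hmul, mul_comm k l]

theorem LinearMap.baseChange_baseChange_apply_of_involutive {R A K : Type*} [CommSemiring R]
    [AddCommMonoid A] [Module R A] [CommSemiring K] [Algebra R K] (σ : A →ₗ[R] A)
    (hinv : ∀ x, σ (σ x) = x) (x : K ⊗[R] A) : σ.baseChange K (σ.baseChange K x) = x := by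
  rw [← LinearMap.comp_apply, ← LinearMap.baseChange_comp,
    show σ ∘ₗ σ = LinearMap.id from LinearMap.ext hinv, LinearMap.baseChange_id, LinearMap.id_apply]

theorem map_mul_self_add_of_antiInvolution {R B M : Type*} [CommSemiring R]
    [NonUnitalNonAssocSemiring B] [Module R B] [AddCommMonoid M] [Module R M]
    (τ : B →ₗ[R] B) (hmul : ∀ x y, τ (x * y) = τ y * τ x) (hinv : ∀ x, τ (τ x) = x)
    (f : B →ₗ[R] M) (hf : ∀ x, f (τ x) = f x) (h2 : ∀ m : M, m + m = 0) (x y : B) :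
    f (τ (x + y) * (x + y)) = f (τ x * x) + f (τ y * y) := by
  have hcross : f (τ y * x) = f (τ x * y) := by rw [← hf, hmul, hinv]
  simp only [map_add, add_mul, mul_add, hcross]
  rw [add_assoc, ← add_assoc (f (τ x * y)), h2, zero_add]

section Involution

variable {F A : Type*} [Field F] [Ring A] [Algebra F A] (σ : A →ₗ[F] A)

def altSubmodule : Submodule F A := LinearMap.range (LinearMap.id - σ)

theorem mem_altSubmodule_iff {y : A} : y ∈ altSubmodule σ ↔ y ∈ altSet σ :=
  ⟨fun ⟨x, hx⟩ ↦ ⟨x, hx.symm⟩, fun ⟨x, hx⟩ ↦ ⟨x, hx.symm⟩⟩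

theorem altSubmodule_mkQ_comp (hinv : ∀ x, σ (σ x) = x) :
    (altSubmodule σ).mkQ ∘ₗ σ = (altSubmodule σ).mkQ :=
  LinearMap.ext fun x ↦ (Submodule.Quotient.eq _).mpr ⟨σ x, by simp [hinv]⟩

theorem baseChange_altSubmodule_mkQ_comp (hinv : ∀ x, σ (σ x) = x) (K : Type*) [CommSemiring K]
    [Algebra F K] :
    (altSubmodule σ).mkQ.baseChange K ∘ₗ σ.baseChange K = (altSubmodule σ).mkQ.baseChange K := by
  rw [← LinearMap.baseChange_comp, altSubmodule_mkQ_comp σ hinv]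

theorem tmul_mem_altSet_baseChange {K : Type*} [Field K] [Algebra F K] (k : K) {y : A}
    (hy : y ∈ altSet σ) : k ⊗ₜ[F] y ∈ altSet (σ.baseChange K) := by
  obtain ⟨x, rfl⟩ := hy
  exact ⟨k ⊗ₜ x, by simp [TensorProduct.tmul_sub]⟩

theorem baseChange_mkQ_eq_zero_of_mem_altSet (hinv : ∀ x, σ (σ x) = x) {K : Type*} [Field K]
    [Algebra F K] {z : K ⊗[F] A} (hz : z ∈ altSet (σ.baseChange K)) :
    (altSubmodule σ).mkQ.baseChange K z = 0 := by
  obtain ⟨x, rfl⟩ := hz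
  rw [map_sub, ← LinearMap.comp_apply, baseChange_altSubmodule_mkQ_comp σ hinv, sub_self]

theorem IsDirect.of_baseChange (K : Type*) [Field K] [Algebra F K]
    (hd : IsDirect (σ.baseChange K)) : IsDirect σ := fun x hx ↦
  Algebra.TensorProduct.includeRight_injective (A := K) (algebraMap F K).injective <| by
    simpa using hd (1 ⊗ₜ x) (by simpa using tmul_mem_altSet_baseChange σ (1 : K) hx)

theorem baseChange_mkQ_mul_self_finsuppSum [CharP F 2] (hmul : ∀ x y, σ (x * y) = σ y * σ x)
    (hinv : ∀ x, σ (σ x) = x) {K ι : Type*} [CommRing K] [Algebra F K] (b : ι → K)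
    (c : ι →₀ A) :
    (altSubmodule σ).mkQ.baseChange K (σ.baseChange K (c.sum fun i a ↦ b i ⊗ₜ a) *
      c.sum fun i a ↦ b i ⊗ₜ a) =
      c.sum fun i a ↦ (b i ^ 2) ⊗ₜ (altSubmodule σ).mkQ (σ a * a) := by
  let q : K ⊗[F] A →+ K ⊗[F] (A ⧸ altSubmodule σ) :=
    AddMonoidHom.mk' (fun x ↦ (altSubmodule σ).mkQ.baseChange K (σ.baseChange K x * x))
      (map_mul_self_add_of_antiInvolution _ (σ.baseChange_mul_rev hmul)
        (σ.baseChange_baseChange_apply_of_involutive hinv) _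
        (LinearMap.congr_fun (baseChange_altSubmodule_mkQ_comp σ hinv K))
        fun m ↦ by rw [← two_smul F m, CharTwo.two_eq_zero, zero_smul])
  exact (map_finsuppSum q _ _).trans (by simp [q, sq])

theorem IsDirect.baseChange_of_odd_finrank [CharP F 2] (hmul : ∀ x y, σ (x * y) = σ y * σ x)
    (hinv : ∀ x, σ (σ x) = x) {K : Type*} [Field K] [Algebra F K] [FiniteDimensional F K]
    (hodd : Odd (finrank F K)) (hd : IsDirect σ) : IsDirect (σ.baseChange K) := by
  intro x hx
  let b := Module.finBasis F K
  obtain ⟨c, rfl⟩ := TensorProduct.eq_repr_basis_left b x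
  have hπ := baseChange_mkQ_eq_zero_of_mem_altSet σ hinv hx
  rw [baseChange_mkQ_mul_self_finsuppSum σ hmul hinv] at hπ
  have hc : c.mapRange (fun a ↦ (altSubmodule σ).mkQ (σ a * a)) (by simp) = 0 := by
    refine TensorProduct.sum_tmul_basis_left_eq_zero (b.sq hodd) _ ?_
    simpa [Finsupp.sum_mapRange_index] using hπ
  suffices c = 0 by simp [this]
  ext i
  apply hd
  rw [← mem_altSubmodule_iff, ← Submodule.Quotient.mk_eq_zero]
  simpa using DFunLike.congr_fun hc i

end Involution

theorem stmt7_general {F A K : Type*} [Field F] [CharP F 2] [Ring A] [Algebra F A]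
    (σ : A →ₗ[F] A) (hmul : ∀ x y : A, σ (x * y) = σ y * σ x) (hinv : ∀ x : A, σ (σ x) = x)
    [Field K] [Algebra F K] [FiniteDimensional F K] (hodd : Odd (Module.finrank F K)) :
    IsDirect σ ↔ IsDirect (LinearMap.baseChange K σ) :=
  ⟨IsDirect.baseChange_of_odd_finrank σ hmul hinv hodd, IsDirect.of_baseChange σ K⟩

theorem stmt7 {F A K : Type*} [Field F] [CharP F 2] [Ring A] [Algebra F A]
    [FiniteDimensional F A]
    (hcentral : ∀ z : A, (∀ y : A, z * y = y * z) → ∃ a : F, algebraMap F A a = z)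
    (hsimple : IsSimpleOrder (TwoSidedIdeal A))
    (σ : A →ₗ[F] A) (hmul : ∀ x y : A, σ (x * y) = σ y * σ x) (hinv : ∀ x : A, σ (σ x) = x)
    (horth : IsOrthogonal σ)
    [Field K] [Algebra F K] [FiniteDimensional F K] (hodd : Odd (Module.finrank F K)) :
    IsDirect σ ↔ IsDirect (LinearMap.baseChange K σ) :=
  stmt7_general σ hmul hinv hodd
end
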